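/- arXiv:1207.1175 — 5 statements merged into one kernel-verified Lean document; each statement's English description precedes it below -/
import Mathlib

section
/- There exists a constant C > 0 such that for every integer N ≥ 2, the sum over all pairs (n,m) of nonzero integers with |n| ≤ N, |m| ≤ N and |n+m| > N of 1/(n²·|m|) is at most C·(log N)/N. -/
open Finset

/-- Tail bound for the sum of `1/k^2`. -/
lemma aux_inv_sq_sum (a N : ℕ) (ha : 1 ≤ a) :
    ∑ k ∈ Finset.Icc a N, (1 : ℝ) / (k : ℝ) ^ 2 ≤ 2 / a := by
  have ha' : (0:ℝ) < a := by exact_mod_cast ha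
  rcases lt_or_ge N a with h | h
  · rw [Finset.Icc_eq_empty (by omega)]
    simp; positivity
  · have key : ∀ M, a ≤ M → ∑ k ∈ Finset.Icc a M, (1 : ℝ) / (k : ℝ) ^ 2
        ≤ 2 / a - 2 / (M + 1) := by
      intro M hM
      induction M, hM using Nat.le_induction with
      | base =>
        rw [Finset.Icc_self, Finset.sum_singleton]
        have ha1 : (1:ℝ) ≤ (a:ℝ) := by exact_mod_cast ha
        have h1 : (1:ℝ)/(a:ℝ)^2 ≤ 2/((a:ℝ)*((a:ℝ)+1)) := by
          rw [div_le_div_iff₀ (by positivity) (by positivity)]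
          nlinarith
        have h2 : (2:ℝ)/((a:ℝ)*((a:ℝ)+1)) = 2/a - 2/((a:ℝ)+1) := by
          field_simp; ring
        linarith
      | succ M hM ih =>
        rw [Finset.sum_Icc_succ_top (by omega)]
        have hx : (0:ℝ) < (M:ℝ) + 1 := by positivity
        have h1 : (1:ℝ)/((M:ℝ)+1)^2 ≤ 2/((M:ℝ)+1) - 2/(((M:ℝ)+1)+1) := by
          have : (2:ℝ)/((M:ℝ)+1) - 2/(((M:ℝ)+1)+1) = 2/(((M:ℝ)+1)*(((M:ℝ)+1)+1)) := by
            field_simp; ring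
          rw [this, div_le_div_iff₀ (by positivity) (by positivity)]
          nlinarith
        push_cast
        push_cast at ih
        linarith
    have := key N h
    have hN : (0:ℝ) < (N:ℝ) + 1 := by positivity
    have : (0:ℝ) ≤ 2/((N:ℝ)+1) := by positivity
    push_cast at key ⊢
    linarith [key N h]

/-- Sum of an even function over nonzero integers in `[-N, N]`. -/
lemma aux_symm_sum (N : ℕ) (h : ℤ → ℝ) (hs : ∀ n, h (-n) = h n) :
    ∑ n ∈ (Finset.Icc (-(N : ℤ)) (N : ℤ)).filter (· ≠ 0), h n
      = 2 * ∑ k ∈ Finset.Icc 1 N, h (k : ℤ) := by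
  have hsplit : (Finset.Icc (-(N : ℤ)) (N : ℤ)).filter (· ≠ 0)
      = Finset.Icc (-(N:ℤ)) (-1) ∪ Finset.Icc 1 (N:ℤ) := by
    ext x; simp only [Finset.mem_filter, Finset.mem_Icc, Finset.mem_union, ne_eq]
    omega
  have hdisj : Disjoint (Finset.Icc (-(N:ℤ)) (-1)) (Finset.Icc 1 (N:ℤ)) := by
    rw [Finset.disjoint_left]
    intro x hx hx'
    simp only [Finset.mem_Icc] at hx hx'
    omega
  have hneg : ∑ n ∈ Finset.Icc (-(N:ℤ)) (-1), h n = ∑ n ∈ Finset.Icc 1 (N:ℤ), h n := by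
    apply Finset.sum_nbij' (i := fun n => -n) (j := fun n => -n)
    · intro x hx; simp only [Finset.mem_Icc] at hx ⊢; omega
    · intro x hx; simp only [Finset.mem_Icc] at hx ⊢; omega
    · intro x _; ring
    · intro x _; ring
    · intro x _; rw [hs]
  have hcast : ∑ n ∈ Finset.Icc 1 (N:ℤ), h n = ∑ k ∈ Finset.Icc 1 N, h (k : ℤ) := by
    apply Finset.sum_nbij' (g := fun k : ℕ => h (k : ℤ)) (i := fun n => n.toNat) (j := fun k => (k : ℤ))
    · intro x hx; simp only [Finset.mem_Icc] at hx ⊢; omega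
    · intro x hx; simp only [Finset.mem_Icc] at hx ⊢; omega
    · intro x hx; simp only [Finset.mem_Icc] at hx; omega
    · intro x _; simp
    · intro x hx; simp only [Finset.mem_Icc] at hx
      congr 1; omega
  rw [hsplit, Finset.sum_union hdisj, hneg, hcast, two_mul]

/-- Reflection of a sum over `Icc 1 N`. -/
lemma aux_reflect_sum (N : ℕ) (f : ℕ → ℝ) :
    ∑ k ∈ Finset.Icc 1 N, f (N + 1 - k) = ∑ k ∈ Finset.Icc 1 N, f k := by
  apply Finset.sum_nbij' (i := fun k => N + 1 - k) (j := fun k => N + 1 - k)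
  · intro x hx; simp only [Finset.mem_Icc] at hx ⊢; omega
  · intro x hx; simp only [Finset.mem_Icc] at hx ⊢; omega
  · intro x hx; simp only [Finset.mem_Icc] at hx; omega
  · intro x hx; simp only [Finset.mem_Icc] at hx; omega
  · intro x _; rfl

/-- There exists a constant `C > 0` such that for every integer `N ≥ 2`,
the sum over all pairs `(n, m)` of nonzero integers with `|n| ≤ N`, `|m| ≤ N` and
`|n + m| > N` of `1 / (n² · |m|)` is at most `C · (log N) / N`. -/
theorem stmt_0 :
    ∃ C : ℝ, 0 < C ∧ ∀ N : ℕ, 2 ≤ N →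
      ∑ n ∈ (Finset.Icc (-(N : ℤ)) (N : ℤ)).filter (· ≠ 0),
        ∑ m ∈ (Finset.Icc (-(N : ℤ)) (N : ℤ)).filter (· ≠ 0),
          (if (N : ℤ) < |n + m| then (1 : ℝ) / ((n : ℝ) ^ 2 * |(m : ℝ)|) else 0)
        ≤ C * Real.log N / N := by
  refine ⟨40, by norm_num, fun N hN => ?_⟩
  set T := (Finset.Icc (-(N : ℤ)) (N : ℤ)).filter (· ≠ 0) with hT
  have hNR : (0:ℝ) < N := by positivity
  have hlog2 : (0.6931471803 : ℝ) < Real.log 2 := Real.log_two_gt_d9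
  have hlogN : Real.log 2 ≤ Real.log N := by
    apply Real.log_le_log (by norm_num)
    exact_mod_cast hN
  have hlogpos : (0:ℝ) < Real.log N := by linarith
  -- membership facts
  have hmemT : ∀ m : ℤ, m ∈ T → 1 ≤ m.natAbs ∧ m.natAbs ≤ N := by
    intro m hm
    simp only [hT, Finset.mem_filter, Finset.mem_Icc, ne_eq] at hm
    omega
  -- the inner-sum bound
  have key : ∀ m ∈ T,
      (∑ n ∈ T, if (N : ℤ) < |n + m| then (1 : ℝ) / ((n : ℝ) ^ 2 * |(m : ℝ)|) else 0)
        ≤ 4 / ((m.natAbs : ℝ) * ((N + 1 - m.natAbs : ℕ) : ℝ)) := by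
    intro m hm
    obtain ⟨hm1, hm2⟩ := hmemT m hm
    set a : ℕ := N + 1 - m.natAbs with haa
    have ha1 : 1 ≤ a := by omega
    have haN : a ≤ N := by omega
    have hm0 : m ≠ 0 := by omega
    have hmR : (0:ℝ) < |(m : ℝ)| := abs_pos.mpr (by exact_mod_cast hm0)
    have habs : |(m : ℝ)| = (m.natAbs : ℝ) := by
      rw [← Int.cast_abs, Int.abs_eq_natAbs, Int.cast_natCast]
    have step1 : (∑ n ∈ T, if (N : ℤ) < |n + m| then (1 : ℝ) / ((n : ℝ) ^ 2 * |(m : ℝ)|) else 0)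
        ≤ (∑ n ∈ T, if (a : ℤ) ≤ |n| then (1 : ℝ) / (n : ℝ) ^ 2 else 0) * (1 / |(m : ℝ)|) := by
      rw [Finset.sum_mul]
      apply Finset.sum_le_sum
      intro n hn
      by_cases hc : (N : ℤ) < |n + m|
      · rw [if_pos hc]
        have habsle : |n + m| ≤ |n| + |m| := abs_add_le n m
        have hmabs : |m| = (m.natAbs : ℤ) := Int.abs_eq_natAbs m
        have hcond : (a : ℤ) ≤ |n| := by
          have : ((a : ℕ) : ℤ) = (N : ℤ) + 1 - (m.natAbs : ℤ) := by
            push_cast [haa]; omega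
          omega
        rw [if_pos hcond, one_div_mul_one_div]
      · rw [if_neg hc]
        split_ifs with h2
        · positivity
        · simp
    have step2 : (∑ n ∈ T, if (a : ℤ) ≤ |n| then (1 : ℝ) / (n : ℝ) ^ 2 else 0)
        = 2 * ∑ k ∈ Finset.Icc 1 N, (if (a : ℤ) ≤ (k : ℤ) then (1 : ℝ) / (k : ℝ) ^ 2 else 0) := by
      rw [hT, aux_symm_sum N (fun n => if (a : ℤ) ≤ |n| then (1 : ℝ) / (n : ℝ) ^ 2 else 0)
        (by intro n; simp [abs_neg, neg_sq])]
      congr 1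
      apply Finset.sum_congr rfl
      intro k hk
      simp only [Finset.mem_Icc] at hk
      have : |(k : ℤ)| = (k : ℤ) := abs_of_nonneg (by positivity)
      rw [this]
      simp only [Int.cast_natCast]
    have step3 : ∑ k ∈ Finset.Icc 1 N, (if (a : ℤ) ≤ (k : ℤ) then (1 : ℝ) / (k : ℝ) ^ 2 else 0)
        ≤ 2 / a := by
      have : ∑ k ∈ Finset.Icc 1 N, (if (a : ℤ) ≤ (k : ℤ) then (1 : ℝ) / (k : ℝ) ^ 2 else 0)
          = ∑ k ∈ Finset.Icc a N, (1 : ℝ) / (k : ℝ) ^ 2 := by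
        rw [← Finset.sum_filter]
        apply Finset.sum_congr _ (fun _ _ => rfl)
        ext k
        simp only [Finset.mem_filter, Finset.mem_Icc]
        constructor
        · rintro ⟨⟨h1, h2⟩, h3⟩; exact ⟨by exact_mod_cast h3, h2⟩
        · rintro ⟨h1, h2⟩; exact ⟨⟨by omega, h2⟩, by exact_mod_cast h1⟩
      rw [this]
      exact aux_inv_sq_sum a N ha1
    have haR : (0:ℝ) < (a : ℝ) := by exact_mod_cast ha1
    have hmabsR : (0:ℝ) < (m.natAbs : ℝ) := by exact_mod_cast hm1
    calc (∑ n ∈ T, if (N : ℤ) < |n + m| then (1 : ℝ) / ((n : ℝ) ^ 2 * |(m : ℝ)|) else 0)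
        ≤ (∑ n ∈ T, if (a : ℤ) ≤ |n| then (1 : ℝ) / (n : ℝ) ^ 2 else 0) * (1 / |(m : ℝ)|) :=
          step1
      _ ≤ (2 * (2 / a)) * (1 / |(m : ℝ)|) := by
          apply mul_le_mul_of_nonneg_right _ (by positivity)
          rw [step2]
          linarith [step3]
      _ = 4 / ((m.natAbs : ℝ) * (a : ℝ)) := by
          rw [habs]; field_simp; ring
  -- sum the bound over m
  have sum1 : (∑ n ∈ T, ∑ m ∈ T,
        if (N : ℤ) < |n + m| then (1 : ℝ) / ((n : ℝ) ^ 2 * |(m : ℝ)|) else 0)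
      ≤ ∑ m ∈ T, 4 / ((m.natAbs : ℝ) * ((N + 1 - m.natAbs : ℕ) : ℝ)) := by
    rw [Finset.sum_comm]
    exact Finset.sum_le_sum key
  have sum2 : (∑ m ∈ T, 4 / ((m.natAbs : ℝ) * ((N + 1 - m.natAbs : ℕ) : ℝ)))
      = 2 * ∑ k ∈ Finset.Icc 1 N, 4 / ((k : ℝ) * ((N + 1 - k : ℕ) : ℝ)) := by
    rw [hT, aux_symm_sum N (fun m => 4 / ((m.natAbs : ℝ) * ((N + 1 - m.natAbs : ℕ) : ℝ)))
      (by intro n; simp [Int.natAbs_neg])]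
    congr 1
  -- partial fractions
  have sum3 : (∑ k ∈ Finset.Icc 1 N, 4 / ((k : ℝ) * ((N + 1 - k : ℕ) : ℝ)))
      = (4 / ((N : ℝ) + 1)) * ∑ k ∈ Finset.Icc 1 N,
          ((1 : ℝ) / (k : ℝ) + 1 / ((N + 1 - k : ℕ) : ℝ)) := by
    rw [Finset.mul_sum]
    apply Finset.sum_congr rfl
    intro k hk
    simp only [Finset.mem_Icc] at hk
    have hk1 : (0:ℝ) < (k : ℝ) := by exact_mod_cast hk.1
    have hj : ((N + 1 - k : ℕ) : ℝ) = (N : ℝ) + 1 - (k : ℝ) := by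
      push_cast [Nat.cast_sub (by omega : k ≤ N + 1)]; ring
    have hj1 : (0:ℝ) < ((N + 1 - k : ℕ) : ℝ) := by
      have : 1 ≤ N + 1 - k := by omega
      exact_mod_cast this
    rw [hj] at hj1 ⊢
    field_simp
    try ring
  have sum4 : (∑ k ∈ Finset.Icc 1 N, ((1 : ℝ) / (k : ℝ) + 1 / ((N + 1 - k : ℕ) : ℝ)))
      = 2 * ∑ k ∈ Finset.Icc 1 N, (1 : ℝ) / (k : ℝ) := by
    rw [Finset.sum_add_distrib, aux_reflect_sum N (fun k => (1 : ℝ) / (k : ℝ))]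
    ring
  have harm : (∑ k ∈ Finset.Icc 1 N, (1 : ℝ) / (k : ℝ)) ≤ 1 + Real.log N := by
    have h1 : (∑ k ∈ Finset.Icc 1 N, (1 : ℝ) / (k : ℝ)) = ((harmonic N : ℚ) : ℝ) := by
      simp_rw [harmonic_eq_sum_Icc, Rat.cast_sum, Rat.cast_inv, Rat.cast_natCast, one_div]
    rw [h1]
    exact harmonic_le_one_add_log N
  have hharm : (∑ k ∈ Finset.Icc 1 N, (1 : ℝ) / (k : ℝ)) ≤ 2.5 * Real.log N := by
    have : (1 : ℝ) ≤ 1.5 * Real.log N := by nlinarith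
    linarith
  have hsum_nonneg : (0:ℝ) ≤ ∑ k ∈ Finset.Icc 1 N, (1 : ℝ) / (k : ℝ) := by
    apply Finset.sum_nonneg; intro k _; positivity
  calc (∑ n ∈ T, ∑ m ∈ T,
        if (N : ℤ) < |n + m| then (1 : ℝ) / ((n : ℝ) ^ 2 * |(m : ℝ)|) else 0)
      ≤ 2 * ((4 / ((N : ℝ) + 1)) * (2 * ∑ k ∈ Finset.Icc 1 N, (1 : ℝ) / (k : ℝ))) := by
        rw [← sum4, ← sum3, ← sum2]; exact sum1
    _ ≤ 2 * ((4 / ((N : ℝ) + 1)) * (2 * (2.5 * Real.log N))) := by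
        have h4 : (0:ℝ) ≤ 4 / ((N : ℝ) + 1) := by positivity
        nlinarith
    _ = 40 * Real.log N / ((N : ℝ) + 1) := by ring
    _ ≤ 40 * Real.log N / N := by
        apply div_le_div_of_nonneg_left (by linarith) hNR (by linarith)
end

section
/- For every integer m ≥ 2 there exists a constant C > 0 such that for every integer N ≥ 2, the sum over all quadruples (j₁,j₂,j₃,j₄) of nonzero integers with |jᵢ| ≤ N for i=1,2,3,4, |j₁+j₂| > N and j₁+j₂+j₃+j₄ = 0, of 1/(|j₁|^{m+1}·|j₂|^{m}·|j₃|) is at most C·(log N)²/N. -/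
open Finset

/-- Splitting the symmetric nonzero interval sum into two copies of the positive part. -/
lemma sum_sym_abs (N : ℕ) (F : ℝ → ℝ) :
    ∑ j ∈ (Finset.Icc (-(N : ℤ)) (N : ℤ)).filter (· ≠ 0), F |(j : ℝ)|
      = 2 * ∑ k ∈ Finset.Icc 1 N, F (k : ℝ) := by
  have hsplit : (Finset.Icc (-(N : ℤ)) (N : ℤ)).filter (· ≠ 0)
      = Finset.Icc (-(N : ℤ)) (-1) ∪ Finset.Icc 1 (N : ℤ) := by
    ext j
    simp only [Finset.mem_filter, Finset.mem_Icc, Finset.mem_union, ne_eq]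
    omega
  have hdisj : Disjoint (Finset.Icc (-(N : ℤ)) (-1)) (Finset.Icc 1 (N : ℤ)) := by
    rw [Finset.disjoint_left]
    intro a ha hb
    simp only [Finset.mem_Icc] at ha hb
    omega
  rw [hsplit, Finset.sum_union hdisj]
  have hpos : ∑ j ∈ Finset.Icc 1 (N : ℤ), F |(j : ℝ)| = ∑ k ∈ Finset.Icc 1 N, F (k : ℝ) := by
    refine Finset.sum_nbij' (fun j => j.toNat) (fun k => (k : ℤ)) ?_ ?_ ?_ ?_ ?_
    · intro a ha; simp only [Finset.mem_Icc] at ha ⊢; omega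
    · intro a ha; simp only [Finset.mem_Icc] at ha ⊢; omega
    · intro a ha; simp only [Finset.mem_Icc] at ha; show ((a.toNat : ℤ)) = a; omega
    · intro a ha; simp only [Finset.mem_Icc] at ha; show ((a : ℤ)).toNat = a; omega
    · intro a ha
      simp only [Finset.mem_Icc] at ha
      have h1 : (0:ℝ) < (a : ℝ) := by exact_mod_cast ha.1.trans_lt' (by norm_num)
      rw [abs_of_pos h1]
      congr 1
      have : ((a.toNat : ℤ) : ℝ) = (a : ℝ) := by rw [Int.toNat_of_nonneg (by omega)]
      exact_mod_cast this.symm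
  have hneg : ∑ j ∈ Finset.Icc (-(N : ℤ)) (-1), F |(j : ℝ)| = ∑ k ∈ Finset.Icc 1 N, F (k : ℝ) := by
    refine Finset.sum_nbij' (fun j => (-j).toNat) (fun k => -(k : ℤ)) ?_ ?_ ?_ ?_ ?_
    · intro a ha; simp only [Finset.mem_Icc] at ha ⊢; omega
    · intro a ha; simp only [Finset.mem_Icc] at ha ⊢; omega
    · intro a ha; simp only [Finset.mem_Icc] at ha; show -(((-a).toNat : ℤ)) = a; omega
    · intro a ha; simp only [Finset.mem_Icc] at ha; show (-(-(a : ℤ))).toNat = a; omega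
    · intro a ha
      simp only [Finset.mem_Icc] at ha
      have h1 : (a : ℝ) < 0 := by exact_mod_cast ha.2.trans_lt (by norm_num)
      rw [abs_of_neg h1]
      congr 1
      have : (((-a).toNat : ℤ) : ℝ) = ((-a : ℤ) : ℝ) := by rw [Int.toNat_of_nonneg (by omega)]
      push_cast at this ⊢
      linarith
  rw [hpos, hneg]; ring

/-- Harmonic bound. -/
lemma sum_one_div_abs_le (N : ℕ) (hN : 1 ≤ N) :
    ∑ j ∈ (Finset.Icc (-(N : ℤ)) (N : ℤ)).filter (· ≠ 0), 1 / |(j : ℝ)|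
      ≤ 2 * (1 + Real.log N) := by
  rw [show (fun j : ℤ => 1 / |(j : ℝ)|) = fun j : ℤ => (fun x : ℝ => 1 / x) |(j : ℝ)| from rfl]
  rw [sum_sym_abs N (fun x : ℝ => 1 / x)]
  have h1 : ∑ k ∈ Finset.Icc 1 N, 1 / (k : ℝ) = (harmonic N : ℝ) := by
    rw [harmonic_eq_sum_Icc]
    push_cast
    simp [one_div]
  rw [h1]
  have := harmonic_le_one_add_log N
  linarith

/-- Basel-type bound. -/
lemma sum_one_div_sq_le (N : ℕ) (hN : 1 ≤ N) :
    ∑ j ∈ (Finset.Icc (-(N : ℤ)) (N : ℤ)).filter (· ≠ 0), 1 / |(j : ℝ)| ^ 2 ≤ 4 := by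
  rw [show (fun j : ℤ => 1 / |(j : ℝ)| ^ 2) = fun j : ℤ => (fun x : ℝ => 1 / x ^ 2) |(j : ℝ)|
    from rfl]
  rw [sum_sym_abs N (fun x : ℝ => 1 / x ^ 2)]
  have h2 : ∑ k ∈ Finset.Icc 1 N, 1 / (k : ℝ) ^ 2 ≤ 2 := by
    have key : ∑ x ∈ Finset.Ioc 1 N, (1:ℝ) / (x : ℝ) ^ 2 ≤ 1 := by
      have h := sum_Ioc_inv_sq_le_sub (α := ℝ) (k := 1) (n := N) one_ne_zero hN
      have hNinv : (0:ℝ) ≤ (N:ℝ)⁻¹ := by positivity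
      simp only [one_div, Nat.cast_one, inv_one] at h ⊢
      linarith
    have h1 : (1:ℝ) / ((1:ℕ) : ℝ) ^ 2 = 1 := by norm_num
    rw [Finset.Icc_eq_cons_Ioc hN, Finset.sum_cons, h1]
    linarith
  linarith

/-- The key pointwise inequality. -/
lemma core_ineq (m : ℕ) (hm : 2 ≤ m) (n A B : ℝ) (hn : 2 ≤ n) (hA : 1 ≤ A) (hB : 1 ≤ B)
    (hAB : n < A + B) :
    1 / (A ^ (m + 1) * B ^ m) ≤ 2 / n * (1 / A ^ 2 * (1 / B)) := by
  have hA0 : 0 < A := by linarith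
  have hB0 : 0 < B := by linarith
  have hn0 : 0 < n := by linarith
  have hR : 2 / n * (1 / A ^ 2 * (1 / B)) = 2 / (n * (A ^ 2 * B)) := by
    field_simp
  rw [hR, div_le_div_iff₀ (by positivity) (by positivity), one_mul]
  rcases le_or_gt n (2 * A) with hcase | hcase
  · have h1 : A ^ 3 ≤ A ^ (m + 1) := pow_le_pow_right₀ hA (by omega)
    have h2 : B ≤ B ^ m := le_self_pow₀ hB (by omega)
    calc n * (A ^ 2 * B) ≤ 2 * A * (A ^ 2 * B) := by
          apply mul_le_mul_of_nonneg_right hcase (by positivity)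
      _ = 2 * (A ^ 3 * B) := by ring
      _ ≤ 2 * (A ^ (m + 1) * B ^ m) := by
          have := mul_le_mul h1 h2 (by linarith) (by positivity)
          linarith
  · have hcase' : n ≤ 2 * B := by linarith
    have h1 : A ^ 2 ≤ A ^ (m + 1) := pow_le_pow_right₀ hA (by omega)
    have h2 : B ^ 2 ≤ B ^ m := pow_le_pow_right₀ hB hm
    calc n * (A ^ 2 * B) ≤ 2 * B * (A ^ 2 * B) := by
          apply mul_le_mul_of_nonneg_right hcase' (by positivity)
      _ = 2 * (A ^ 2 * B ^ 2) := by ring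
      _ ≤ 2 * (A ^ (m + 1) * B ^ m) := by
          have := mul_le_mul h1 h2 (by positivity) (by positivity)
          linarith

/-- For every integer `m ≥ 2` there exists `C > 0` such that for every
integer `N ≥ 2`, the sum over all quadruples `(j₁, j₂, j₃, j₄)` of nonzero integers with
`|jᵢ| ≤ N` for `i = 1, 2, 3, 4`, `|j₁ + j₂| > N` and `j₁ + j₂ + j₃ + j₄ = 0`, of
`1 / (|j₁|^(m+1) · |j₂|^m · |j₃|)` is at most `C · (log N)² / N`. -/
theorem stmt_2 (m : ℕ) (hm : 2 ≤ m) :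
    ∃ C : ℝ, 0 < C ∧ ∀ N : ℕ, 2 ≤ N →
      ∑ j₁ ∈ (Finset.Icc (-(N : ℤ)) (N : ℤ)).filter (· ≠ 0),
        ∑ j₂ ∈ (Finset.Icc (-(N : ℤ)) (N : ℤ)).filter (· ≠ 0),
          ∑ j₃ ∈ (Finset.Icc (-(N : ℤ)) (N : ℤ)).filter (· ≠ 0),
            ∑ j₄ ∈ (Finset.Icc (-(N : ℤ)) (N : ℤ)).filter (· ≠ 0),
              (if (N : ℤ) < |j₁ + j₂| ∧ j₁ + j₂ + j₃ + j₄ = 0 then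
                 (1 : ℝ) / (|(j₁ : ℝ)| ^ (m + 1) * |(j₂ : ℝ)| ^ m * |(j₃ : ℝ)|) else 0)
        ≤ C * (Real.log N) ^ 2 / N := by
  refine ⟨288, by norm_num, ?_⟩
  intro N hN
  set S := (Finset.Icc (-(N : ℤ)) (N : ℤ)).filter (· ≠ 0) with hSdef
  have hNR : (2 : ℝ) ≤ (N : ℝ) := by exact_mod_cast hN
  have hN0 : (0 : ℝ) < (N : ℝ) := by linarith
  have hmemS : ∀ j ∈ S, j ≠ 0 ∧ |j| ≤ (N : ℤ) := by
    intro j hj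
    simp only [hSdef, Finset.mem_filter, Finset.mem_Icc] at hj
    exact ⟨hj.2, abs_le.mpr hj.1⟩
  have habs1 : ∀ j : ℤ, j ≠ 0 → (1 : ℝ) ≤ |(j : ℝ)| := by
    intro j hj
    have : (1 : ℤ) ≤ |j| := Int.one_le_abs hj
    calc (1:ℝ) ≤ ((|j| : ℤ) : ℝ) := by exact_mod_cast this
      _ = |(j : ℝ)| := by push_cast; simp
  -- bound function
  set b : ℤ → ℤ → ℤ → ℝ := fun j₁ j₂ j₃ =>
    2 / (N : ℝ) * (1 / |(j₁ : ℝ)| ^ 2 * (1 / |(j₂ : ℝ)| * (1 / |(j₃ : ℝ)|))) with hbdef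
  have hb_nonneg : ∀ j₁ j₂ j₃, 0 ≤ b j₁ j₂ j₃ := by
    intro j₁ j₂ j₃; rw [hbdef]; positivity
  -- Step 1: bound the quadruple sum by the triple sum of b
  have step1 : ∑ j₁ ∈ S, ∑ j₂ ∈ S, ∑ j₃ ∈ S, ∑ j₄ ∈ S,
      (if (N : ℤ) < |j₁ + j₂| ∧ j₁ + j₂ + j₃ + j₄ = 0 then
        (1 : ℝ) / (|(j₁ : ℝ)| ^ (m + 1) * |(j₂ : ℝ)| ^ m * |(j₃ : ℝ)|) else 0)
      ≤ ∑ j₁ ∈ S, ∑ j₂ ∈ S, ∑ j₃ ∈ S, b j₁ j₂ j₃ := by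
    refine Finset.sum_le_sum fun j₁ hj₁ => Finset.sum_le_sum fun j₂ hj₂ =>
      Finset.sum_le_sum fun j₃ hj₃ => ?_
    -- inner sum over j₄
    have hpt : ∀ j₄ ∈ S,
        (if (N : ℤ) < |j₁ + j₂| ∧ j₁ + j₂ + j₃ + j₄ = 0 then
          (1 : ℝ) / (|(j₁ : ℝ)| ^ (m + 1) * |(j₂ : ℝ)| ^ m * |(j₃ : ℝ)|) else 0)
        ≤ (if j₄ = -(j₁ + j₂ + j₃) then b j₁ j₂ j₃ else 0) := by
      intro j₄ _
      by_cases hc : (N : ℤ) < |j₁ + j₂| ∧ j₁ + j₂ + j₃ + j₄ = 0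
      · rw [if_pos hc, if_pos (by omega)]
        obtain ⟨h₁ne, h₁le⟩ := hmemS j₁ hj₁
        obtain ⟨h₂ne, h₂le⟩ := hmemS j₂ hj₂
        obtain ⟨h₃ne, _⟩ := hmemS j₃ hj₃
        have hA := habs1 j₁ h₁ne
        have hB := habs1 j₂ h₂ne
        have hC := habs1 j₃ h₃ne
        have hsum : (N : ℝ) < |(j₁ : ℝ)| + |(j₂ : ℝ)| := by
          have h1 : (N : ℤ) < |j₁| + |j₂| := by
            have := abs_add_le j₁ j₂; omega
          calc (N : ℝ) < ((|j₁| + |j₂| : ℤ) : ℝ) := by exact_mod_cast h1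
            _ = |(j₁ : ℝ)| + |(j₂ : ℝ)| := by push_cast; simp
        have hcore := core_ineq m hm (N : ℝ) |(j₁ : ℝ)| |(j₂ : ℝ)| hNR hA hB hsum
        rw [hbdef]
        have hCpos : (0 : ℝ) < |(j₃ : ℝ)| := by linarith
        have key : (1 : ℝ) / (|(j₁ : ℝ)| ^ (m + 1) * |(j₂ : ℝ)| ^ m * |(j₃ : ℝ)|)
            = 1 / (|(j₁ : ℝ)| ^ (m + 1) * |(j₂ : ℝ)| ^ m) * (1 / |(j₃ : ℝ)|) := by
          field_simp
        rw [key]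
        calc 1 / (|(j₁:ℝ)| ^ (m+1) * |(j₂:ℝ)| ^ m) * (1 / |(j₃:ℝ)|)
            ≤ 2 / (N:ℝ) * (1 / |(j₁:ℝ)| ^ 2 * (1 / |(j₂:ℝ)|)) * (1 / |(j₃:ℝ)|) := by
              apply mul_le_mul_of_nonneg_right hcore (by positivity)
          _ = 2 / (N:ℝ) * (1 / |(j₁:ℝ)| ^ 2 * (1 / |(j₂:ℝ)| * (1 / |(j₃:ℝ)|))) := by ring
      · rw [if_neg hc]
        split <;> [exact hb_nonneg j₁ j₂ j₃; exact le_refl 0]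
    calc ∑ j₄ ∈ S, (if (N : ℤ) < |j₁ + j₂| ∧ j₁ + j₂ + j₃ + j₄ = 0 then
          (1 : ℝ) / (|(j₁ : ℝ)| ^ (m + 1) * |(j₂ : ℝ)| ^ m * |(j₃ : ℝ)|) else 0)
        ≤ ∑ j₄ ∈ S, (if j₄ = -(j₁ + j₂ + j₃) then b j₁ j₂ j₃ else 0) :=
          Finset.sum_le_sum hpt
      _ = (if -(j₁ + j₂ + j₃) ∈ S then b j₁ j₂ j₃ else 0) :=
          Finset.sum_ite_eq' S (-(j₁ + j₂ + j₃)) (fun _ => b j₁ j₂ j₃)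
      _ ≤ b j₁ j₂ j₃ := by
          split <;> [exact le_refl _; exact hb_nonneg j₁ j₂ j₃]
  -- Step 2: factor the triple sum
  have step2 : ∑ j₁ ∈ S, ∑ j₂ ∈ S, ∑ j₃ ∈ S, b j₁ j₂ j₃
      = 2 / (N : ℝ) * ((∑ j₁ ∈ S, 1 / |(j₁ : ℝ)| ^ 2) *
        ((∑ j₂ ∈ S, 1 / |(j₂ : ℝ)|) * (∑ j₃ ∈ S, 1 / |(j₃ : ℝ)|))) := by
    simp only [hbdef, ← Finset.mul_sum, ← Finset.sum_mul]
  -- Step 3: put together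
  have hsum1 := sum_one_div_abs_le N (by omega)
  have hsum2 := sum_one_div_sq_le N (by omega)
  have hlog : Real.log 2 ≤ Real.log N := Real.log_le_log (by norm_num) hNR
  have hlog2 : (0.6931471803 : ℝ) < Real.log 2 := Real.log_two_gt_d9
  have hL : (1 : ℝ) / 2 ≤ Real.log N := by linarith
  have hLpos : (0 : ℝ) < Real.log N := by linarith
  have hfac : 2 * (1 + Real.log N) ≤ 6 * Real.log N := by linarith
  have hsum1' : ∑ j ∈ S, 1 / |(j : ℝ)| ≤ 6 * Real.log N := le_trans hsum1 hfac
  have hs1nonneg : (0:ℝ) ≤ ∑ j ∈ S, 1 / |(j : ℝ)| :=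
    Finset.sum_nonneg fun j _ => by positivity
  have hs2nonneg : (0:ℝ) ≤ ∑ j ∈ S, 1 / |(j : ℝ)| ^ 2 :=
    Finset.sum_nonneg fun j _ => by positivity
  calc ∑ j₁ ∈ S, ∑ j₂ ∈ S, ∑ j₃ ∈ S, ∑ j₄ ∈ S,
      (if (N : ℤ) < |j₁ + j₂| ∧ j₁ + j₂ + j₃ + j₄ = 0 then
        (1 : ℝ) / (|(j₁ : ℝ)| ^ (m + 1) * |(j₂ : ℝ)| ^ m * |(j₃ : ℝ)|) else 0)
      ≤ ∑ j₁ ∈ S, ∑ j₂ ∈ S, ∑ j₃ ∈ S, b j₁ j₂ j₃ := step1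
    _ = 2 / (N : ℝ) * ((∑ j₁ ∈ S, 1 / |(j₁ : ℝ)| ^ 2) *
        ((∑ j₂ ∈ S, 1 / |(j₂ : ℝ)|) * (∑ j₃ ∈ S, 1 / |(j₃ : ℝ)|))) := step2
    _ ≤ 2 / (N : ℝ) * (4 * ((6 * Real.log N) * (6 * Real.log N))) := by
        apply mul_le_mul_of_nonneg_left _ (by positivity)
        apply mul_le_mul hsum2 _ (by positivity) (by norm_num)
        apply mul_le_mul hsum1' hsum1' hs1nonneg (by positivity)
    _ = 288 * (Real.log N) ^ 2 / N := by field_simp; ring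
end

section
/- For every integer m ≥ 2 there exists a constant C > 0 such that for every integer N ≥ 2, the sum over all triples (j₁,j₂,j₄) of nonzero integers with |j₁| ≤ N, |j₂| ≤ N, |j₄| ≤ N and |j₁+j₂| > N, of 1/(|j₁|^{m+1}·|j₂|^{m-1}·|j₄|) is at most C·(log N)²/N. -/
/-!
The `j₄`-sum factors out and is at most `2 (1 + log N)`. In the remaining pair sum write
`a = |j₁|`, `b = |j₂|`: since `m ≥ 2` each term is at most `1 / (a³ b)`, and `a + b > N` forces
`a ≥ N/2` or `b > N/2`. In the first case `1 / (a³ b) ≤ (4 / N²) (1 / a) (1 / b)`, which sums to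
`O((log N)² / N²)`. In the second `1 / (a³ b) ≤ (2 / N) / a³`, and for fixed `j₁` at most `2 a`
values of `j₂` satisfy `|j₁ + j₂| > N`, so these terms sum to `O(1 / N)`.
-/

open Finset

noncomputable def nonzeroIcc (N : ℕ) : Finset ℤ := (Icc (-(N : ℤ)) N).filter (· ≠ 0)

lemma nonzeroIcc_eq_image_union (N : ℕ) :
    nonzeroIcc N =
      (Icc 1 N).image (fun k : ℕ => (k : ℤ)) ∪ (Icc 1 N).image (fun k : ℕ => -(k : ℤ)) := by
  ext j
  simp only [nonzeroIcc, mem_filter, mem_Icc, mem_union, mem_image]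
  constructor
  · intro h
    rcases lt_or_gt_of_ne h.2 with hj | hj
    · exact Or.inr ⟨(-j).toNat, by omega, by omega⟩
    · exact Or.inl ⟨j.toNat, by omega, by omega⟩
  · rintro (⟨k, hk, rfl⟩ | ⟨k, hk, rfl⟩) <;> omega

lemma sum_nonzeroIcc {M : Type*} [AddCommMonoid M] (N : ℕ) (g : ℤ → M) :
    ∑ j ∈ nonzeroIcc N, g j = ∑ k ∈ Icc 1 N, (g k + g (-k)) := by
  rw [nonzeroIcc_eq_image_union, sum_union, sum_image, sum_image, sum_add_distrib]
  · intro a _ b _ h; simpa using h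
  · intro a _ b _ h; simpa using h
  · rw [disjoint_left]
    simp only [mem_image, mem_Icc, not_exists, not_and]
    rintro _ ⟨k, hk, rfl⟩ l hl
    omega

lemma sum_nonzeroIcc_abs (N : ℕ) (f : ℝ → ℝ) :
    ∑ j ∈ nonzeroIcc N, f |(j : ℝ)| = 2 * ∑ k ∈ Icc 1 N, f k := by
  rw [sum_nonzeroIcc, mul_sum]
  refine sum_congr rfl fun k _ => ?_
  simp [two_mul]

lemma sum_nonzeroIcc_inv_abs_le (N : ℕ) :
    ∑ j ∈ nonzeroIcc N, 1 / |(j : ℝ)| ≤ 2 * (1 + Real.log N) := by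
  rw [sum_nonzeroIcc_abs (f := fun x => 1 / x)]
  have := harmonic_le_one_add_log N
  simp_rw [harmonic_eq_sum_Icc, Rat.cast_sum, Rat.cast_inv, Rat.cast_natCast] at this
  simp only [one_div]
  linarith

lemma sum_nonzeroIcc_inv_abs_sq_le (N : ℕ) :
    ∑ j ∈ nonzeroIcc N, 1 / |(j : ℝ)| ^ 2 ≤ 4 := by
  rw [sum_nonzeroIcc_abs (f := fun x => 1 / x ^ 2)]
  have := sum_Ioo_inv_sq_le (α := ℝ) 0 (N + 1)
  have hIoo : Ioo 0 (N + 1) = Icc 1 N := by ext; simp only [mem_Ioo, mem_Icc]; omega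
  rw [hIoo] at this
  simp only [one_div]
  norm_num at this
  linarith

lemma card_filter_lt_abs_add_le (N : ℕ) (j : ℤ) :
    #((Icc (-(N : ℤ)) N).filter (fun k => N < |j + k|)) ≤ 2 * j.natAbs := by
  have hsub : (Icc (-(N : ℤ)) N).filter (fun k => N < |j + k|) ⊆
      Ioc (N - |j|) N ∪ Ico (-(N : ℤ)) (-N + |j|) := by
    intro k hk
    simp only [mem_filter, mem_Icc, mem_union, mem_Ioc, mem_Ico] at hk ⊢
    rcases abs_cases j with ⟨hj, _⟩ | ⟨hj, _⟩ <;>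
      rcases abs_cases (j + k) with ⟨hjk, _⟩ | ⟨hjk, _⟩ <;> omega
  calc _ ≤ #(Ioc (N - |j|) N ∪ Ico (-(N : ℤ)) (-N + |j|)) := card_le_card hsub
    _ ≤ #(Ioc (N - |j|) N) + #(Ico (-(N : ℤ)) (-N + |j|)) := card_union_le _ _
    _ = 2 * j.natAbs := by simp only [Int.card_Ioc, Int.card_Ico, Int.abs_eq_natAbs]; omega

lemma one_div_pow_mul_pow_le {m : ℕ} (hm : 2 ≤ m) {a b : ℝ} (ha : 1 ≤ a) (hb : 1 ≤ b) :
    1 / (a ^ (m + 1) * b ^ (m - 1)) ≤ 1 / (a ^ 3 * b) := by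
  have ha3 : a ^ 3 ≤ a ^ (m + 1) := pow_le_pow_right₀ ha (by omega)
  have hb1 : b ≤ b ^ (m - 1) := le_self_pow₀ hb (by omega)
  gcongr

lemma one_div_cube_mul_le {a b n : ℝ} (ha : 1 ≤ a) (hb : 1 ≤ b) (hn : 0 < n) (hab : n < a + b) :
    1 / (a ^ 3 * b) ≤ 4 / n ^ 2 * (1 / a * (1 / b)) + 2 / n * (1 / a ^ 3) := by
  have ha0 : 0 < a := by linarith
  have hb0 : 0 < b := by linarith
  rcases le_or_gt n (2 * a) with hna | hnb
  · have h : 1 / a ^ 2 ≤ 4 / n ^ 2 := by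
      rw [div_le_div_iff₀ (by positivity) (by positivity)]; nlinarith
    calc 1 / (a ^ 3 * b) = 1 / a ^ 2 * (1 / a * (1 / b)) := by field_simp
      _ ≤ 4 / n ^ 2 * (1 / a * (1 / b)) := by gcongr
      _ ≤ _ := le_add_of_nonneg_right (by positivity)
  · have h : 1 / b ≤ 2 / n := by
      rw [div_le_div_iff₀ hb0 hn]; linarith
    calc 1 / (a ^ 3 * b) = 1 / b * (1 / a ^ 3) := by field_simp
      _ ≤ 2 / n * (1 / a ^ 3) := by gcongr
      _ ≤ _ := le_add_of_nonneg_left (by positivity)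

lemma one_le_abs_of_mem_nonzeroIcc {N : ℕ} {j : ℤ} (hj : j ∈ nonzeroIcc N) : 1 ≤ |(j : ℝ)| := by
  have : (1 : ℤ) ≤ |j| := Int.one_le_abs (mem_filter.mp hj).2
  exact_mod_cast this

lemma sum_nonzeroIcc_ite_lt_abs_add_le (N : ℕ) (j₁ : ℤ) (c : ℝ) (hc : 0 ≤ c) :
    ∑ j₂ ∈ nonzeroIcc N, (if (N : ℤ) < |j₁ + j₂| then c else 0) ≤ 2 * |(j₁ : ℝ)| * c := by
  rw [← sum_filter, sum_const, nsmul_eq_mul, ← Int.cast_abs, ← Nat.cast_natAbs]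
  gcongr
  calc (#((nonzeroIcc N).filter fun j₂ => (N : ℤ) < |j₁ + j₂|) : ℝ)
      ≤ #((Icc (-(N : ℤ)) N).filter fun j₂ => (N : ℤ) < |j₁ + j₂|) := by
        gcongr; exact filter_subset _ _
    _ ≤ 2 * j₁.natAbs := by exact_mod_cast card_filter_lt_abs_add_le N j₁

lemma sum_sum_ite_lt_abs_add_le {m : ℕ} (hm : 2 ≤ m) {N : ℕ} (hN : 0 < N) :
    ∑ j₁ ∈ nonzeroIcc N, ∑ j₂ ∈ nonzeroIcc N,
        (if (N : ℤ) < |j₁ + j₂| then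
          (1 : ℝ) / (|(j₁ : ℝ)| ^ (m + 1) * |(j₂ : ℝ)| ^ (m - 1)) else 0)
      ≤ 4 / (N : ℝ) ^ 2 * (2 * (1 + Real.log N)) ^ 2 + 16 / N := by
  set T := nonzeroIcc N
  have hN' : (0 : ℝ) < N := by exact_mod_cast hN
  have hpoint : ∀ j₁ ∈ T, ∀ j₂ ∈ T,
      (if (N : ℤ) < |j₁ + j₂| then
          (1 : ℝ) / (|(j₁ : ℝ)| ^ (m + 1) * |(j₂ : ℝ)| ^ (m - 1)) else 0)
        ≤ 4 / N ^ 2 * (1 / |(j₁ : ℝ)| * (1 / |(j₂ : ℝ)|))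
          + if (N : ℤ) < |j₁ + j₂| then 2 / N * (1 / |(j₁ : ℝ)| ^ 3) else 0 := by
    intro j₁ hj₁ j₂ hj₂
    have ha := one_le_abs_of_mem_nonzeroIcc hj₁
    have hb := one_le_abs_of_mem_nonzeroIcc hj₂
    split_ifs with hc
    · have hab : (N : ℝ) < |(j₁ : ℝ)| + |(j₂ : ℝ)| := by
        have : ((N : ℤ) : ℝ) < |((j₁ + j₂ : ℤ) : ℝ)| := by exact_mod_cast hc
        push_cast at this
        linarith [abs_add_le (j₁ : ℝ) j₂]
      exact (one_div_pow_mul_pow_le hm ha hb).trans (one_div_cube_mul_le ha hb hN' hab)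
    · rw [add_zero]; positivity
  have hsmall : ∑ j₁ ∈ T, ∑ j₂ ∈ T, 4 / (N : ℝ) ^ 2 * (1 / |(j₁ : ℝ)| * (1 / |(j₂ : ℝ)|))
      ≤ 4 / (N : ℝ) ^ 2 * (2 * (1 + Real.log N)) ^ 2 := by
    have hfactor : ∑ j₁ ∈ T, ∑ j₂ ∈ T, 4 / (N : ℝ) ^ 2 * (1 / |(j₁ : ℝ)| * (1 / |(j₂ : ℝ)|))
        = 4 / N ^ 2 * (∑ j ∈ T, 1 / |(j : ℝ)|) ^ 2 := by
      rw [sq (∑ j ∈ T, 1 / |(j : ℝ)|), sum_mul_sum, mul_sum]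
      simp_rw [mul_sum]
    rw [hfactor]
    gcongr
    exact sum_nonzeroIcc_inv_abs_le N
  have hlarge : ∑ j₁ ∈ T, ∑ j₂ ∈ T,
      (if (N : ℤ) < |j₁ + j₂| then 2 / (N : ℝ) * (1 / |(j₁ : ℝ)| ^ 3) else 0) ≤ 16 / (N : ℝ) := by
    calc _ ≤ ∑ j₁ ∈ T, 2 * |(j₁ : ℝ)| * (2 / (N : ℝ) * (1 / |(j₁ : ℝ)| ^ 3)) :=
          sum_le_sum fun j₁ _ => sum_nonzeroIcc_ite_lt_abs_add_le N j₁ _ (by positivity)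
      _ = 4 / (N : ℝ) * ∑ j₁ ∈ T, 1 / |(j₁ : ℝ)| ^ 2 := by
          rw [mul_sum]
          refine sum_congr rfl fun j₁ hj₁ => ?_
          have := one_le_abs_of_mem_nonzeroIcc hj₁
          field_simp
          ring
      _ ≤ 4 / (N : ℝ) * 4 := by gcongr; exact sum_nonzeroIcc_inv_abs_sq_le N
      _ = 16 / N := by ring
  calc _ ≤ ∑ j₁ ∈ T, ∑ j₂ ∈ T, (4 / (N : ℝ) ^ 2 * (1 / |(j₁ : ℝ)| * (1 / |(j₂ : ℝ)|))
          + if (N : ℤ) < |j₁ + j₂| then 2 / (N : ℝ) * (1 / |(j₁ : ℝ)| ^ 3) else 0) :=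
        sum_le_sum fun j₁ hj₁ => sum_le_sum fun j₂ hj₂ => hpoint j₁ hj₁ j₂ hj₂
    _ ≤ _ := by
        simp_rw [sum_add_distrib]
        exact add_le_add hsmall hlarge

lemma sum_sum_sum_ite_one_div_mul {ι κ : Type*} (s : Finset ι) (t : Finset κ)
    (p : ι → ι → Prop) [∀ i j, Decidable (p i j)] (f : ι → ι → ℝ) (g : κ → ℝ) :
    ∑ i ∈ s, ∑ j ∈ s, ∑ k ∈ t, (if p i j then 1 / (f i j * g k) else 0)
      = (∑ i ∈ s, ∑ j ∈ s, if p i j then 1 / f i j else 0) * ∑ k ∈ t, 1 / g k := by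
  simp_rw [sum_mul, mul_sum]
  refine sum_congr rfl fun i _ => sum_congr rfl fun j _ => sum_congr rfl fun k _ => ?_
  split_ifs
  · rw [one_div_mul_one_div]
  · rw [zero_mul]

/-- For every integer `m ≥ 2` there exists `C > 0` such that for every
integer `N ≥ 2`, the sum over all triples `(j₁, j₂, j₄)` of nonzero integers with
`|j₁| ≤ N`, `|j₂| ≤ N`, `|j₄| ≤ N` and `|j₁ + j₂| > N`, of
`1 / (|j₁|^(m+1) · |j₂|^(m-1) · |j₄|)` is at most `C · (log N)² / N`. -/
theorem stmt_3 (m : ℕ) (hm : 2 ≤ m) :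
    ∃ C : ℝ, 0 < C ∧ ∀ N : ℕ, 2 ≤ N →
      ∑ j₁ ∈ (Finset.Icc (-(N : ℤ)) (N : ℤ)).filter (· ≠ 0),
        ∑ j₂ ∈ (Finset.Icc (-(N : ℤ)) (N : ℤ)).filter (· ≠ 0),
          ∑ j₄ ∈ (Finset.Icc (-(N : ℤ)) (N : ℤ)).filter (· ≠ 0),
            (if (N : ℤ) < |j₁ + j₂| then
               (1 : ℝ) / (|(j₁ : ℝ)| ^ (m + 1) * |(j₂ : ℝ)| ^ (m - 1) * |(j₄ : ℝ)|) else 0)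
        ≤ C * (Real.log N) ^ 2 / N := by
  refine ⟨480, by norm_num, fun N hN => ?_⟩
  have hN₂ : (2 : ℝ) ≤ N := by exact_mod_cast hN
  set L := Real.log N
  have hL : 1 ≤ 2 * L := by
    linarith [Real.log_two_gt_d9, Real.log_le_log two_pos hN₂]
  have hLN : 1 + L ≤ N := by linarith [Real.log_le_sub_one_of_pos (by linarith : (0 : ℝ) < N)]
  have hsq : (1 + L) ^ 2 / (N : ℝ) ^ 2 ≤ (1 + L) / N := by
    have h1L : 0 ≤ (1 + L) * N := by positivity
    rw [div_le_div_iff₀ (by positivity) (by positivity)]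
    nlinarith [mul_le_mul_of_nonneg_left hLN h1L]
  rw [show (Icc (-(N : ℤ)) N).filter (· ≠ 0) = nonzeroIcc N from rfl,
    sum_sum_sum_ite_one_div_mul]
  calc _ ≤ (4 / (N : ℝ) ^ 2 * (2 * (1 + L)) ^ 2 + 16 / N) * (2 * (1 + L)) := by
        gcongr
        · exact sum_sum_ite_lt_abs_add_le hm (by omega)
        · exact sum_nonzeroIcc_inv_abs_le N
    _ = (16 * ((1 + L) ^ 2 / (N : ℝ) ^ 2) + 16 / N) * (2 * (1 + L)) := by ring
    _ ≤ (16 * ((1 + L) / N) + 16 / N) * (2 * (1 + L)) := by gcongr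
    _ = 32 * ((2 + L) * (1 + L)) / N := by ring
    _ ≤ 32 * (15 * L ^ 2) / N := by gcongr 32 * ?_ / _; nlinarith
    _ = 480 * L ^ 2 / N := by ring
end

section
/- For every integer m ≥ 2 there exists a constant C > 0 such that for every integer N ≥ 2, the sum over all triples (j₁,j₃,j₄) of nonzero integers with |j₁| ≤ N, |j₃| ≤ N, |j₄| ≤ N and |j₃+j₄| > N, of 1/(|j₁|^{m+1}·|j₃|^{m}·|j₄|) is at most C·(log N)/N. -/
/-!
Since `|j₃ + j₄| ≤ |j₃| + |j₄|` and `m ≥ 2`, each term is at most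
`|j₁|⁻² · (|j₃|² |j₄|)⁻¹ · [N < |j₃| + |j₄|]`, and the sum over `j₁` is bounded by `∑ a⁻² ≤ 2`.
For fixed `c = |j₄|` the tail `∑_{b > N - c} b⁻²` is at most `2 / (N + 1 - c)`, and the partial
fractions `1 / (c (N + 1 - c)) = (1 / c + 1 / (N + 1 - c)) / (N + 1)` turn the remaining sum over
`c` into twice a harmonic sum, i.e. `O(log N / N)`.
-/

open Finset Real

lemma sum_nonzero_Icc_natAbs {M : Type*} [AddCommMonoid M] (N : ℕ) (h : ℕ → M) :
    ∑ j ∈ (Icc (-(N : ℤ)) N).filter (· ≠ 0), h j.natAbs = 2 • ∑ a ∈ Icc 1 N, h a := by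
  have hsplit : (Icc (-(N : ℤ)) N).filter (· ≠ 0) = Icc 1 (N : ℤ) ∪ Icc (-(N : ℤ)) (-1) := by
    ext j; simp only [mem_filter, mem_Icc, mem_union]; omega
  have hdisj : Disjoint (Icc 1 (N : ℤ)) (Icc (-(N : ℤ)) (-1)) :=
    disjoint_left.2 fun j h₁ h₂ => by simp only [mem_Icc] at h₁ h₂; omega
  have hpos : ∑ j ∈ Icc 1 (N : ℤ), h j.natAbs = ∑ a ∈ Icc 1 N, h a :=
    sum_nbij' Int.natAbs Nat.cast (fun j hj => by simp only [mem_Icc] at hj ⊢; omega)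
      (fun a ha => by simp only [mem_Icc] at ha ⊢; omega)
      (fun j hj => by simp only [mem_Icc] at hj; omega) (fun a _ => rfl) (fun _ _ => rfl)
  have hneg : ∑ j ∈ Icc (-(N : ℤ)) (-1), h j.natAbs = ∑ a ∈ Icc 1 N, h a :=
    sum_nbij' Int.natAbs (fun a => -(a : ℤ)) (fun j hj => by simp only [mem_Icc] at hj ⊢; omega)
      (fun a ha => by simp only [mem_Icc] at ha ⊢; omega)
      (fun j hj => by simp only [mem_Icc] at hj; omega) (fun a _ => by simp) (fun _ _ => rfl)
  rw [hsplit, sum_union hdisj, hpos, hneg, two_nsmul]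

lemma sum_Icc_inv_sq_le_two (N : ℕ) : ∑ a ∈ Icc 1 N, ((a : ℝ) ^ 2)⁻¹ ≤ 2 := by
  have h := sum_Ioo_inv_sq_le (α := ℝ) 0 (N + 1)
  have hI : Ioo 0 (N + 1) = Icc 1 N := by ext; simp only [mem_Ioo, mem_Icc]; omega
  rwa [hI, Nat.cast_zero, zero_add, div_one] at h

lemma sum_filter_lt_add_inv_sq_le (N c : ℕ) (hc : c ≤ N) :
    ∑ b ∈ (Icc 1 N).filter (N < · + c), ((b : ℝ) ^ 2)⁻¹ ≤ 2 / ((N : ℝ) + 1 - c) := by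
  have hsub : (Icc 1 N).filter (N < · + c) ⊆ Ioo (N - c) (N + 1) := by
    intro b hb; simp only [mem_filter, mem_Icc, mem_Ioo] at hb ⊢; omega
  calc ∑ b ∈ (Icc 1 N).filter (N < · + c), ((b : ℝ) ^ 2)⁻¹
      ≤ ∑ b ∈ Ioo (N - c) (N + 1), ((b : ℝ) ^ 2)⁻¹ :=
        sum_le_sum_of_subset_of_nonneg hsub fun _ _ _ => by positivity
    _ ≤ 2 / (((N - c : ℕ) : ℝ) + 1) := sum_Ioo_inv_sq_le _ _
    _ = 2 / ((N : ℝ) + 1 - c) := by rw [Nat.cast_sub hc]; ring_nf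

lemma sum_Icc_inv_reflect (N : ℕ) :
    ∑ c ∈ Icc 1 N, ((N : ℝ) + 1 - c)⁻¹ = ∑ c ∈ Icc 1 N, (c : ℝ)⁻¹ := by
  have h := sum_Ico_reflect (fun k : ℕ => (k : ℝ)⁻¹) 1 (Nat.le_succ (N + 1))
  simp only [Ico_add_one_right_eq_Icc, Nat.add_sub_cancel,
    show N + 1 + 1 - (N + 1) = 1 by omega] at h
  rw [← h]
  refine sum_congr rfl fun c hc => ?_
  rw [Nat.cast_sub ((mem_Icc.1 hc).2.trans (Nat.le_succ N))]
  push_cast; ring_nf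

lemma sum_Icc_inv_le_one_add_log (N : ℕ) : ∑ c ∈ Icc 1 N, (c : ℝ)⁻¹ ≤ 1 + log N := by
  simpa [harmonic_eq_sum_Icc] using harmonic_le_one_add_log N

lemma sum_sum_ite_lt_add_inv_sq_mul_inv_le (N : ℕ) :
    ∑ b ∈ Icc 1 N, ∑ c ∈ Icc 1 N, (if N < b + c then ((b : ℝ) ^ 2 * c)⁻¹ else 0)
      ≤ 4 * (1 + log N) / (N + 1) := by
  have hN : (0 : ℝ) < N + 1 := by positivity
  rw [sum_comm]
  calc ∑ c ∈ Icc 1 N, ∑ b ∈ Icc 1 N, (if N < b + c then ((b : ℝ) ^ 2 * c)⁻¹ else 0)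
      ≤ ∑ c ∈ Icc 1 N, (c : ℝ)⁻¹ * (2 / ((N : ℝ) + 1 - c)) := by
        refine sum_le_sum fun c hc => ?_
        rw [← sum_filter]
        simp_rw [mul_inv, ← sum_mul, mul_comm _ (c : ℝ)⁻¹]
        gcongr
        exact sum_filter_lt_add_inv_sq_le N c (mem_Icc.1 hc).2
    _ = 2 / (N + 1) * (∑ c ∈ Icc 1 N, (c : ℝ)⁻¹ + ∑ c ∈ Icc 1 N, ((N : ℝ) + 1 - c)⁻¹) := by
        rw [← sum_add_distrib, mul_sum]
        refine sum_congr rfl fun c hc => ?_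
        have hc₀ : (0 : ℝ) < c := by exact_mod_cast (mem_Icc.1 hc).1
        have hc₁ : (0 : ℝ) < N + 1 - c := by
          have : (c : ℝ) ≤ N := by exact_mod_cast (mem_Icc.1 hc).2
          linarith
        field_simp
        ring
    _ ≤ 4 * (1 + log N) / (N + 1) := by
        rw [sum_Icc_inv_reflect, div_mul_eq_mul_div]
        gcongr ?_ / _
        linarith [sum_Icc_inv_le_one_add_log N]

lemma ite_lt_abs_add_le_inv_sq_mul_ite (m N : ℕ) (hm : 2 ≤ m) {j₁ j₃ j₄ : ℤ}
    (h₁ : j₁ ≠ 0) (h₃ : j₃ ≠ 0) (h₄ : j₄ ≠ 0) :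
    (if (N : ℤ) < |j₃ + j₄| then
        (1 : ℝ) / (|(j₁ : ℝ)| ^ (m + 1) * |(j₃ : ℝ)| ^ m * |(j₄ : ℝ)|) else 0)
      ≤ ((j₁.natAbs : ℝ) ^ 2)⁻¹ *
        (if N < j₃.natAbs + j₄.natAbs then ((j₃.natAbs : ℝ) ^ 2 * j₄.natAbs)⁻¹ else 0) := by
  simp only [Nat.cast_natAbs, Int.cast_abs]
  split_ifs with hlt hlt'
  · have ha₁ : 1 ≤ |(j₁ : ℝ)| := by exact_mod_cast Int.one_le_abs h₁
    have ha₃ : 1 ≤ |(j₃ : ℝ)| := by exact_mod_cast Int.one_le_abs h₃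
    rw [one_div, ← mul_inv, ← mul_assoc]
    gcongr
    omega
  · rw [Int.abs_eq_natAbs] at hlt
    have := Int.natAbs_add_le j₃ j₄
    omega
  · positivity
  · positivity

/-- For every integer `m ≥ 2` there exists `C > 0` such that for every
integer `N ≥ 2`, the sum over all triples `(j₁, j₃, j₄)` of nonzero integers with
`|j₁| ≤ N`, `|j₃| ≤ N`, `|j₄| ≤ N` and `|j₃ + j₄| > N`, of
`1 / (|j₁|^(m+1) · |j₃|^m · |j₄|)` is at most `C · (log N) / N`. -/
theorem stmt_5 (m : ℕ) (hm : 2 ≤ m) :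
    ∃ C : ℝ, 0 < C ∧ ∀ N : ℕ, 2 ≤ N →
      ∑ j₁ ∈ (Finset.Icc (-(N : ℤ)) (N : ℤ)).filter (· ≠ 0),
        ∑ j₃ ∈ (Finset.Icc (-(N : ℤ)) (N : ℤ)).filter (· ≠ 0),
          ∑ j₄ ∈ (Finset.Icc (-(N : ℤ)) (N : ℤ)).filter (· ≠ 0),
            (if (N : ℤ) < |j₃ + j₄| then
               (1 : ℝ) / (|(j₁ : ℝ)| ^ (m + 1) * |(j₃ : ℝ)| ^ m * |(j₄ : ℝ)|) else 0)
        ≤ C * Real.log N / N := by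
  refine ⟨192, by norm_num, fun N hN => ?_⟩
  have hN₂ : (2 : ℝ) ≤ N := by exact_mod_cast hN
  have hlog : 1 + log N ≤ 3 * log N := by
    linarith [log_two_gt_d9, log_le_log two_pos hN₂]
  set S := (Icc (-(N : ℤ)) N).filter (· ≠ 0)
  set g : ℕ → ℕ → ℝ := fun b c => if N < b + c then ((b : ℝ) ^ 2 * c)⁻¹ else 0
  calc _ ≤ ∑ j₁ ∈ S, ∑ j₃ ∈ S, ∑ j₄ ∈ S, ((j₁.natAbs : ℝ) ^ 2)⁻¹ * g j₃.natAbs j₄.natAbs := by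
        gcongr with j₁ hj₁ j₃ hj₃ j₄ hj₄
        exact ite_lt_abs_add_le_inv_sq_mul_ite m N hm (mem_filter.1 hj₁).2 (mem_filter.1 hj₃).2
          (mem_filter.1 hj₄).2
    _ = 8 * ((∑ a ∈ Icc 1 N, ((a : ℝ) ^ 2)⁻¹) * ∑ b ∈ Icc 1 N, ∑ c ∈ Icc 1 N, g b c) := by
        simp_rw [← mul_sum]
        rw [← sum_mul, sum_nonzero_Icc_natAbs N (fun a => ((a : ℝ) ^ 2)⁻¹),
          sum_nonzero_Icc_natAbs N (fun b => ∑ j ∈ S, g b j.natAbs),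
          sum_congr rfl fun b _ => sum_nonzero_Icc_natAbs N (g b)]
        simp only [nsmul_eq_mul, ← mul_sum]
        ring
    _ ≤ 8 * (2 * (4 * (1 + log N) / (N + 1))) := by
        gcongr
        · exact sum_Icc_inv_sq_le_two N
        · exact sum_sum_ite_lt_add_inv_sq_mul_inv_le N
    _ = 64 * (1 + log N) / (N + 1) := by ring
    _ ≤ 64 * (3 * log N) / N := by gcongr; linarith
    _ = 192 * log N / N := by ring
end

section
/- For every integer m ≥ 1 there exist complex numbers a₁, …, a_m, depending only on m, such that the following holds: for every integer N ≥ 1 and every trigonometric polynomial u(x) = Σ_{j=-N}^{N} c_j e^{ijx} with c₀ = 0, setting u⁺(x) = Σ_{j=1}^{N} c_j e^{ijx} and u⁻(x) = Σ_{j=-N}^{-1} c_j e^{ijx}, one has ∫₀^{2π} u·(H∂ₓ^m π_{>N}(u ∂ₓ u))·∂ₓ^{m+1}u dx = Σ_{j=1}^{m} a_j ∫₀^{2π} [ π_{>N}(∂ₓ^{j}u⁺ · ∂ₓ^{m-j+1}u⁺)·π_{>N}(u⁻ · ∂ₓ^{m+1}u⁻) − π_{>N}(∂ₓ^{j}u⁻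 · ∂ₓ^{m-j+1}u⁻)·π_{>N}(u⁺ · ∂ₓ^{m+1}u⁺) ] dx. -/
/- We represent trigonometric polynomials by their (finitely supported) Fourier
coefficients `c : ℤ →₀ ℂ`, the associated function being `x ↦ Σ_j c j · e^{ijx}`.
All the operators appearing in the statement (derivatives `∂ₓ`, the Hilbert transform
`H(e^{ijx}) = -i·sgn(j)·e^{ijx}`, the Dirichlet projection `π_{>N}` on modes `|n| > N`,
restriction to positive/negative modes, and multiplication of functions, i.e.
convolution of coefficients) act on the Fourier coefficients. -/

/-- The trigonometric polynomial with Fourier coefficients `c`. -/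
noncomputable def toFun (c : ℤ →₀ ℂ) : ℝ → ℂ :=
  fun x => c.sum fun j v => v * Complex.exp (Complex.I * j * x)

/-- Fourier multiplier with symbol `m`. -/
noncomputable def coefMul (m : ℤ → ℂ) (c : ℤ →₀ ℂ) : ℤ →₀ ℂ :=
  c.sum fun j v => Finsupp.single j (m j * v)

/-- `k`-th derivative `∂ₓ^k`. -/
noncomputable def Dx (k : ℕ) (c : ℤ →₀ ℂ) : ℤ →₀ ℂ :=
  coefMul (fun j => (Complex.I * j) ^ k) c

/-- Hilbert transform `H(e^{ijx}) = -i·sgn(j)·e^{ijx}`. -/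
noncomputable def Hilb (c : ℤ →₀ ℂ) : ℤ →₀ ℂ :=
  coefMul (fun j => -Complex.I * (j.sign : ℂ)) c

/-- Projection `π_{>N}` on the Fourier modes `|n| > N`. -/
noncomputable def piGT (N : ℕ) (c : ℤ →₀ ℂ) : ℤ →₀ ℂ :=
  coefMul (fun j => if (N : ℤ) < |j| then 1 else 0) c

/-- Positive-frequency part `u⁺`. -/
noncomputable def posPart (c : ℤ →₀ ℂ) : ℤ →₀ ℂ :=
  coefMul (fun j => if 0 < j then 1 else 0) c

/-- Negative-frequency part `u⁻`. -/
noncomputable def negPart (c : ℤ →₀ ℂ) : ℤ →₀ ℂ :=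
  coefMul (fun j => if j < 0 then 1 else 0) c

/-- Convolution of coefficients: Fourier coefficients of the product of functions. -/
noncomputable def conv (a b : ℤ →₀ ℂ) : ℤ →₀ ℂ :=
  a.sum fun j v => b.sum fun k w => Finsupp.single (j + k) (v * w)

/-! ### Auxiliary lemmas -/

lemma coefMul_apply (md : ℤ → ℂ) (c : ℤ →₀ ℂ) (n : ℤ) : coefMul md c n = md n * c n := by
  classical
  unfold coefMul
  rw [Finsupp.sum_apply]
  unfold Finsupp.sum
  rw [Finset.sum_congr rfl (fun k _ => Finsupp.single_apply)]
  by_cases h : n ∈ c.support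
  · rw [Finset.sum_ite_eq' c.support n (fun k => md k * c k)]
    simp [h]
  · have : c n = 0 := Finsupp.notMem_support_iff.mp h
    rw [Finset.sum_ite_eq' c.support n (fun k => md k * c k)]
    simp [h, this]

lemma conv_apply (a b : ℤ →₀ ℂ) (n : ℤ) : conv a b n = a.sum fun p v => v * b (n - p) := by
  classical
  unfold conv
  rw [Finsupp.sum_apply]
  refine Finsupp.sum_congr fun j _ => ?_
  rw [Finsupp.sum_apply]
  unfold Finsupp.sum
  rw [Finset.sum_congr rfl (fun k _ => Finsupp.single_apply)]
  have : ∀ k, (j + k = n) = (k = n - j) := by intro k; simp [eq_comm]; omega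
  simp_rw [this]
  rw [Finset.sum_ite_eq' b.support (n - j) (fun k => a j * b k)]
  by_cases h : (n - j) ∈ b.support
  · simp [h]
  · have : b (n - j) = 0 := Finsupp.notMem_support_iff.mp h
    simp [h, this]

lemma conv_comm (a b : ℤ →₀ ℂ) : conv a b = conv b a := by
  unfold conv
  rw [Finsupp.sum_comm]
  refine Finsupp.sum_congr fun k _ => Finsupp.sum_congr fun j _ => ?_
  rw [add_comm, mul_comm]

lemma coefMul_add (md : ℤ → ℂ) (a b : ℤ →₀ ℂ) :
    coefMul md (a + b) = coefMul md a + coefMul md b := by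
  ext n; simp [coefMul_apply, mul_add]

lemma coefMul_coefMul (m₁ m₂ : ℤ → ℂ) (c : ℤ →₀ ℂ) :
    coefMul m₁ (coefMul m₂ c) = coefMul (fun j => m₁ j * m₂ j) c := by
  ext n; simp [coefMul_apply, mul_assoc]

lemma coefMul_smul (md : ℤ → ℂ) (r : ℂ) (c : ℤ →₀ ℂ) :
    coefMul md (r • c) = r • coefMul md c := by
  ext n; simp [coefMul_apply]; ring

lemma coefMul_finset_sum (md : ℤ → ℂ) {ι : Type*} (s : Finset ι) (f : ι → ℤ →₀ ℂ) :
    coefMul md (∑ i ∈ s, f i) = ∑ i ∈ s, coefMul md (f i) := by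
  ext n; simp [coefMul_apply, Finsupp.finset_sum_apply, Finset.mul_sum]

lemma conv_zero_left (b : ℤ →₀ ℂ) : conv 0 b = 0 := by
  unfold conv; simp

lemma conv_add_left (a a' b : ℤ →₀ ℂ) : conv (a + a') b = conv a b + conv a' b := by
  ext n
  simp only [conv_apply, Finsupp.add_apply]
  rw [Finsupp.sum_add_index' (fun p => by simp) (fun p v w => by ring)]

lemma conv_add_right (a b b' : ℤ →₀ ℂ) : conv a (b + b') = conv a b + conv a b' := by
  rw [conv_comm, conv_add_left, conv_comm, conv_comm b' a]

lemma conv_smul_left (r : ℂ) (a b : ℤ →₀ ℂ) : conv (r • a) b = r • conv a b := by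
  ext n
  simp only [conv_apply, Finsupp.smul_apply, smul_eq_mul]
  rw [Finsupp.sum_smul_index' (h := fun p v => v * b (n - p))]
  · rw [Finsupp.mul_sum]
    refine Finsupp.sum_congr fun p _ => ?_
    simp only [smul_eq_mul]; ring
  · intro p; simp

lemma conv_finset_sum_left {ι : Type*} (s : Finset ι) (f : ι → ℤ →₀ ℂ) (b : ℤ →₀ ℂ) :
    conv (∑ i ∈ s, f i) b = ∑ i ∈ s, conv (f i) b := by
  classical
  induction s using Finset.cons_induction with
  | empty => simp [conv_zero_left]
  | cons i s hi ih => rw [Finset.sum_cons, conv_add_left, ih, Finset.sum_cons]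

lemma toFun_conv (a b : ℤ →₀ ℂ) (x : ℝ) :
    toFun (conv a b) x = toFun a x * toFun b x := by
  unfold toFun conv
  rw [Finsupp.sum_sum_index (fun i => by simp) (fun i u v => by ring)]
  rw [Finsupp.sum_mul]
  refine Finsupp.sum_congr fun j _ => ?_
  rw [Finsupp.sum_sum_index (fun i => by simp) (fun i u v => by ring)]
  rw [Finsupp.mul_sum]
  refine Finsupp.sum_congr fun k _ => ?_
  rw [Finsupp.sum_single_index (by simp)]
  rw [show (Complex.I * (↑(j+k)) * x) = Complex.I * j * x + Complex.I * k * x by push_cast; ring,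
    Complex.exp_add]
  ring

lemma toFun_sub (a b : ℤ →₀ ℂ) (x : ℝ) :
    toFun (a - b) x = toFun a x - toFun b x := by
  unfold toFun
  rw [Finsupp.sum_sub_index (fun p u v => by ring)]

lemma integral_toFun (c : ℤ →₀ ℂ) :
    (∫ x in (0:ℝ)..(2 * Real.pi), toFun c x) = 2 * Real.pi * c 0 := by
  unfold toFun Finsupp.sum
  rw [intervalIntegral.integral_finset_sum (fun j _ => by
    apply Continuous.intervalIntegrable
    exact continuous_const.mul (Complex.continuous_exp.comp (by continuity)))]
  have key : ∀ j : ℤ, (∫ x in (0:ℝ)..(2 * Real.pi), c j * Complex.exp (Complex.I * j * x))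
      = if j = 0 then 2 * Real.pi * c j else 0 := by
    intro j
    rcases eq_or_ne j 0 with hj | hj
    · subst hj
      simp only [Int.cast_zero, mul_zero, zero_mul, Complex.exp_zero, mul_one]
      rw [intervalIntegral.integral_const]
      simp [Complex.real_smul]
    · have hc : (Complex.I * j) ≠ 0 := by
        simp [Complex.I_ne_zero, Complex.ext_iff]
        exact_mod_cast hj
      rw [if_neg hj]
      rw [intervalIntegral.integral_const_mul]
      rw [integral_exp_mul_complex hc]
      have h2 : Complex.exp (Complex.I * j * (2 * Real.pi : ℝ)) = 1 := by
        rw [show (Complex.I * j * (2 * Real.pi : ℝ)) = (j : ℂ) * (2 * Real.pi * Complex.I) by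
          push_cast; ring]
        exact Complex.exp_int_mul_two_pi_mul_I j
      rw [h2]
      simp
  rw [Finset.sum_congr rfl (fun j _ => key j)]
  rw [Finset.sum_ite_eq' c.support 0 (fun j => 2 * Real.pi * c j)]
  by_cases h : (0:ℤ) ∈ c.support
  · simp [h]
  · have : c 0 = 0 := Finsupp.notMem_support_iff.mp h
    simp [h, this]

/-! ### Derivatives -/

lemma Dx_apply (k : ℕ) (c : ℤ →₀ ℂ) (n : ℤ) :
    Dx k c n = (Complex.I * n) ^ k * c n := coefMul_apply _ _ _

lemma Dx_zero (c : ℤ →₀ ℂ) : Dx 0 c = c := by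
  ext n; simp [Dx_apply]

lemma Dx_Dx (k l : ℕ) (c : ℤ →₀ ℂ) : Dx k (Dx l c) = Dx (k + l) c := by
  ext n; rw [Dx_apply, Dx_apply, Dx_apply, ← mul_assoc, ← pow_add]

lemma Dx_add (k : ℕ) (a b : ℤ →₀ ℂ) : Dx k (a + b) = Dx k a + Dx k b :=
  coefMul_add _ _ _

lemma Dx_piGT (k N : ℕ) (x : ℤ →₀ ℂ) : Dx k (piGT N x) = piGT N (Dx k x) := by
  unfold Dx piGT
  rw [coefMul_coefMul, coefMul_coefMul]
  congr 1; ext j; ring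

/-! ### Support lemmas -/

lemma coefMul_ne_zero (md : ℤ → ℂ) (c : ℤ →₀ ℂ) (n : ℤ) (h : coefMul md c n ≠ 0) :
    c n ≠ 0 := by
  rw [coefMul_apply] at h
  intro h0; rw [h0, mul_zero] at h; exact h rfl

lemma piGT_ne_zero (N : ℕ) (c : ℤ →₀ ℂ) (n : ℤ) (h : piGT N c n ≠ 0) :
    (N : ℤ) < |n| ∧ c n ≠ 0 := by
  rw [piGT, coefMul_apply] at h
  by_cases hn : (N : ℤ) < |n|
  · refine ⟨hn, ?_⟩; intro h0; rw [h0, mul_zero] at h; exact h rfl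
  · simp [hn] at h

lemma conv_eq_zero_at (a b : ℤ →₀ ℂ) (n : ℤ)
    (h : ∀ p q : ℤ, a p ≠ 0 → b q ≠ 0 → p + q ≠ n) : conv a b n = 0 := by
  rw [conv_apply]
  unfold Finsupp.sum
  apply Finset.sum_eq_zero
  intro p hp
  by_cases hb : b (n - p) = 0
  · simp [hb]
  · exact absurd (by ring) (h p (n - p) (Finsupp.mem_support_iff.mp hp) hb)

lemma conv_pos_supp (a b : ℤ →₀ ℂ) (ha : ∀ p, a p ≠ 0 → 0 < p) (hb : ∀ p, b p ≠ 0 → 0 < p)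
    (n : ℤ) (hn : n ≤ 0) : conv a b n = 0 := by
  apply conv_eq_zero_at
  intro p q hp hq
  have := ha p hp; have := hb q hq; omega

lemma conv_neg_supp (a b : ℤ →₀ ℂ) (ha : ∀ p, a p ≠ 0 → p < 0) (hb : ∀ p, b p ≠ 0 → p < 0)
    (n : ℤ) (hn : 0 ≤ n) : conv a b n = 0 := by
  apply conv_eq_zero_at
  intro p q hp hq
  have := ha p hp; have := hb q hq; omega

lemma conv_cross_supp (N : ℕ) (a b : ℤ →₀ ℂ)
    (ha : ∀ p, a p ≠ 0 → 1 ≤ p ∧ p ≤ (N:ℤ)) (hb : ∀ p, b p ≠ 0 → -(N:ℤ) ≤ p ∧ p ≤ -1)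
    (n : ℤ) (hn : (N:ℤ) < |n|) : conv a b n = 0 := by
  apply conv_eq_zero_at
  rw [lt_abs] at hn
  intro p q hp hq
  have := ha p hp; have := hb q hq
  omega

/-! ### Hilbert transform sign lemmas -/

lemma Hilb_pos (x : ℤ →₀ ℂ) (h : ∀ n, x n ≠ 0 → 0 < n) :
    Hilb x = (-Complex.I) • x := by
  ext n
  rw [Hilb, coefMul_apply, Finsupp.smul_apply]
  by_cases hx : x n = 0
  · simp [hx]
  · rw [Int.sign_eq_one_iff_pos.mpr (h n hx)]
    simp

lemma Hilb_neg (x : ℤ →₀ ℂ) (h : ∀ n, x n ≠ 0 → n < 0) :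
    Hilb x = Complex.I • x := by
  ext n
  rw [Hilb, coefMul_apply, Finsupp.smul_apply]
  by_cases hx : x n = 0
  · simp [hx]
  · rw [Int.sign_eq_neg_one_iff_neg.mpr (h n hx)]
    simp

lemma Hilb_add (a b : ℤ →₀ ℂ) : Hilb (a + b) = Hilb a + Hilb b := coefMul_add _ _ _

/-! ### Leibniz rule -/

lemma Dx_support_subset (k : ℕ) (a : ℤ →₀ ℂ) : (Dx k a).support ⊆ a.support := by
  intro n hn
  exact Finsupp.mem_support_iff.mpr (coefMul_ne_zero _ _ _ (Finsupp.mem_support_iff.mp hn))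

lemma leibniz (k : ℕ) (a b : ℤ →₀ ℂ) :
    Dx k (conv a b)
      = ∑ j ∈ Finset.range (k+1), ((k.choose j : ℂ)) • conv (Dx j a) (Dx (k-j) b) := by
  ext n
  rw [Dx_apply, conv_apply, Finsupp.finset_sum_apply]
  have term : ∀ j ∈ Finset.range (k+1),
      ((k.choose j : ℂ) • conv (Dx j a) (Dx (k-j) b)) n
        = ∑ p ∈ a.support, (k.choose j : ℂ) *
            ((Complex.I * p) ^ j * a p * ((Complex.I * (n - p)) ^ (k-j) * b (n - p))) := by
    intro j _
    rw [Finsupp.smul_apply, conv_apply, smul_eq_mul,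
      Finsupp.sum_of_support_subset _ (Dx_support_subset j a) _ (fun p _ => by simp),
      Finset.mul_sum]
    refine Finset.sum_congr rfl fun p _ => ?_
    rw [Dx_apply, Dx_apply]
    norm_cast
  rw [Finset.sum_congr rfl term, Finset.sum_comm]
  unfold Finsupp.sum
  rw [Finset.mul_sum]
  refine Finset.sum_congr rfl fun p _ => ?_
  have expand : (Complex.I * n) ^ k = (Complex.I * p + Complex.I * (n - p)) ^ k := by
    congr 1
    ring_nf
  rw [expand, add_pow, Finset.sum_mul]
  refine Finset.sum_congr rfl fun j _ => ?_
  ring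

/-! ### Pairing replacement -/

lemma conv_zero_replace (N : ℕ) (X Y Z : ℤ →₀ ℂ) (hX : ∀ n, X n ≠ 0 → (N:ℤ) < n)
    (hYZ : ∀ t : ℤ, t < -(N:ℤ) → Y t = Z t) : conv X Y 0 = conv X Z 0 := by
  rw [conv_apply, conv_apply]
  refine Finsupp.sum_congr fun p hp => ?_
  have := hX p (Finsupp.mem_support_iff.mp hp)
  rw [hYZ (0 - p) (by omega)]

lemma conv_zero_replace' (N : ℕ) (X Y Z : ℤ →₀ ℂ) (hX : ∀ n, X n ≠ 0 → n < -(N:ℤ))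
    (hYZ : ∀ t : ℤ, (N:ℤ) < t → Y t = Z t) : conv X Y 0 = conv X Z 0 := by
  rw [conv_apply, conv_apply]
  refine Finsupp.sum_congr fun p hp => ?_
  have := hX p (Finsupp.mem_support_iff.mp hp)
  rw [hYZ (0 - p) (by omega)]

lemma piGT_add (N : ℕ) (a b : ℤ →₀ ℂ) : piGT N (a + b) = piGT N a + piGT N b :=
  coefMul_add _ _ _

lemma piGT_smul (N : ℕ) (r : ℂ) (x : ℤ →₀ ℂ) : piGT N (r • x) = r • piGT N x :=
  coefMul_smul _ _ _

lemma piGT_finset_sum (N : ℕ) {ι : Type*} (s : Finset ι) (f : ι → ℤ →₀ ℂ) :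
    piGT N (∑ i ∈ s, f i) = ∑ i ∈ s, piGT N (f i) :=
  coefMul_finset_sum _ _ _

lemma posPart_apply (c : ℤ →₀ ℂ) (n : ℤ) :
    posPart c n = (if 0 < n then (1:ℂ) else 0) * c n := coefMul_apply _ _ _

lemma negPart_apply (c : ℤ →₀ ℂ) (n : ℤ) :
    negPart c n = (if n < 0 then (1:ℂ) else 0) * c n := coefMul_apply _ _ _

/-- The core coefficient identity. -/
lemma core (m N : ℕ) (c : ℤ →₀ ℂ) (hc0 : c 0 = 0)
    (hcN : ∀ j : ℤ, (N : ℤ) < |j| → c j = 0) :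
    conv (Hilb (Dx m (piGT N (conv c (Dx 1 c))))) (conv c (Dx (m + 1) c)) 0
      = ∑ j ∈ Finset.range (m + 1), (m.choose j : ℂ) *
          (-Complex.I *
              conv (piGT N (conv (Dx j (posPart c)) (Dx (m - j + 1) (posPart c))))
                (piGT N (conv (negPart c) (Dx (m + 1) (negPart c)))) 0
            + Complex.I *
              conv (piGT N (conv (Dx j (negPart c)) (Dx (m - j + 1) (negPart c))))
                (piGT N (conv (posPart c) (Dx (m + 1) (posPart c)))) 0) := by
  classical
  set p := posPart c with hp
  set q := negPart c with hq
  have hps : ∀ n, p n ≠ 0 → 1 ≤ n ∧ n ≤ (N:ℤ) := by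
    intro n hn
    rw [hp, posPart_apply] at hn
    by_cases h0 : 0 < n
    · refine ⟨by omega, ?_⟩
      by_contra h
      have hzn : c n = 0 := hcN n (by rw [lt_abs]; left; omega)
      rw [hzn, mul_zero] at hn; exact absurd rfl hn
    · rw [if_neg h0, zero_mul] at hn; exact absurd rfl hn
  have hqs : ∀ n, q n ≠ 0 → -(N:ℤ) ≤ n ∧ n ≤ -1 := by
    intro n hn
    rw [hq, negPart_apply] at hn
    by_cases h0 : n < 0
    · refine ⟨?_, by omega⟩
      by_contra h
      have hzn : c n = 0 := hcN n (by rw [lt_abs]; right; omega)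
      rw [hzn, mul_zero] at hn; exact absurd rfl hn
    · rw [if_neg h0, zero_mul] at hn; exact absurd rfl hn
  have hpsD : ∀ k : ℕ, ∀ n, Dx k p n ≠ 0 → 1 ≤ n ∧ n ≤ (N:ℤ) :=
    fun k n hn => hps n (coefMul_ne_zero _ _ _ hn)
  have hqsD : ∀ k : ℕ, ∀ n, Dx k q n ≠ 0 → -(N:ℤ) ≤ n ∧ n ≤ -1 :=
    fun k n hn => hqs n (coefMul_ne_zero _ _ _ hn)
  have hcpq : c = p + q := by
    ext n
    rw [Finsupp.add_apply, hp, hq, posPart_apply, negPart_apply]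
    rcases lt_trichotomy n 0 with h | h | h
    · rw [if_neg (by omega), if_pos h]; ring
    · subst h; rw [hc0]; norm_num
    · rw [if_pos h, if_neg (by omega)]; ring
  have hsplit : piGT N (conv c (Dx 1 c))
      = piGT N (conv p (Dx 1 p)) + piGT N (conv q (Dx 1 q)) := by
    have h1 : conv c (Dx 1 c)
        = (conv p (Dx 1 p) + conv p (Dx 1 q)) + (conv q (Dx 1 p) + conv q (Dx 1 q)) := by
      rw [hcpq, Dx_add, conv_add_left, conv_add_right, conv_add_right]
    have hcross1 : piGT N (conv p (Dx 1 q)) = 0 := by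
      ext n
      rw [piGT, coefMul_apply, Finsupp.coe_zero, Pi.zero_apply]
      by_cases hn : (N:ℤ) < |n|
      · rw [conv_cross_supp N p (Dx 1 q) hps (hqsD 1) n hn, mul_zero]
      · rw [if_neg hn, zero_mul]
    have hcross2 : piGT N (conv q (Dx 1 p)) = 0 := by
      ext n
      rw [conv_comm, piGT, coefMul_apply, Finsupp.coe_zero, Pi.zero_apply]
      by_cases hn : (N:ℤ) < |n|
      · rw [conv_cross_supp N (Dx 1 p) q (hpsD 1) hqs n hn, mul_zero]
      · rw [if_neg hn, zero_mul]
    rw [h1, piGT_add, piGT_add, piGT_add, hcross1, hcross2]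
    abel
  have hpos1 : ∀ n, Dx m (piGT N (conv p (Dx 1 p))) n ≠ 0 → 0 < n := by
    intro n hn
    have h2 := piGT_ne_zero N _ n (coefMul_ne_zero _ _ _ hn)
    by_contra h
    exact h2.2 (conv_pos_supp p (Dx 1 p) (fun t ht => by have := hps t ht; omega)
      (fun t ht => by have := hpsD 1 t ht; omega) n (by omega))
  have hneg1 : ∀ n, Dx m (piGT N (conv q (Dx 1 q))) n ≠ 0 → n < 0 := by
    intro n hn
    have h2 := piGT_ne_zero N _ n (coefMul_ne_zero _ _ _ hn)
    by_contra h
    exact h2.2 (conv_neg_supp q (Dx 1 q) (fun t ht => by have := hqs t ht; omega)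
      (fun t ht => by have := hqsD 1 t ht; omega) n (by omega))
  have hM : Hilb (Dx m (piGT N (conv c (Dx 1 c))))
      = -Complex.I • (∑ j ∈ Finset.range (m+1), (m.choose j:ℂ) •
            piGT N (conv (Dx j p) (Dx (m - j + 1) p)))
        + Complex.I • (∑ j ∈ Finset.range (m+1), (m.choose j:ℂ) •
            piGT N (conv (Dx j q) (Dx (m - j + 1) q))) := by
    rw [hsplit, Dx_add, Hilb_add, Hilb_pos _ hpos1, Hilb_neg _ hneg1]
    congr 1
    · congr 1
      rw [Dx_piGT, leibniz, piGT_finset_sum]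
      refine Finset.sum_congr rfl fun j hj => ?_
      rw [Dx_Dx, piGT_smul]
    · congr 1
      rw [Dx_piGT, leibniz, piGT_finset_sum]
      refine Finset.sum_congr rfl fun j hj => ?_
      rw [Dx_Dx, piGT_smul]
  have hY : ∀ t : ℤ, t < -(N:ℤ) →
      conv c (Dx (m+1) c) t = piGT N (conv q (Dx (m+1) q)) t := by
    intro t ht
    have habs : (N:ℤ) < |t| := by rw [lt_abs]; right; omega
    have h1 : conv c (Dx (m+1) c)
        = (conv p (Dx (m+1) p) + conv p (Dx (m+1) q))
          + (conv q (Dx (m+1) p) + conv q (Dx (m+1) q)) := by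
      rw [hcpq, Dx_add, conv_add_left, conv_add_right, conv_add_right]
    rw [h1, Finsupp.add_apply, Finsupp.add_apply, Finsupp.add_apply]
    rw [conv_pos_supp p (Dx (m+1) p) (fun s hs => by have := hps s hs; omega)
      (fun s hs => by have := hpsD (m+1) s hs; omega) t (by omega)]
    rw [conv_cross_supp N p (Dx (m+1) q) hps (hqsD (m+1)) t habs]
    rw [conv_comm q (Dx (m+1) p),
      conv_cross_supp N (Dx (m+1) p) q (hpsD (m+1)) hqs t habs]
    rw [piGT, coefMul_apply, if_pos habs, one_mul]
    ring
  have hY' : ∀ t : ℤ, (N:ℤ) < t →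
      conv c (Dx (m+1) c) t = piGT N (conv p (Dx (m+1) p)) t := by
    intro t ht
    have habs : (N:ℤ) < |t| := by rw [lt_abs]; left; omega
    have h1 : conv c (Dx (m+1) c)
        = (conv p (Dx (m+1) p) + conv p (Dx (m+1) q))
          + (conv q (Dx (m+1) p) + conv q (Dx (m+1) q)) := by
      rw [hcpq, Dx_add, conv_add_left, conv_add_right, conv_add_right]
    rw [h1, Finsupp.add_apply, Finsupp.add_apply, Finsupp.add_apply]
    rw [conv_neg_supp q (Dx (m+1) q) (fun s hs => by have := hqs s hs; omega)
      (fun s hs => by have := hqsD (m+1) s hs; omega) t (by omega)]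
    rw [conv_cross_supp N p (Dx (m+1) q) hps (hqsD (m+1)) t habs]
    rw [conv_comm q (Dx (m+1) p),
      conv_cross_supp N (Dx (m+1) p) q (hpsD (m+1)) hqs t habs]
    rw [piGT, coefMul_apply, if_pos habs, one_mul]
    ring
  have hApS : ∀ j : ℕ, ∀ n, piGT N (conv (Dx j p) (Dx (m - j + 1) p)) n ≠ 0 → (N:ℤ) < n := by
    intro j n hn
    have h2 := piGT_ne_zero N _ n hn
    have hpos : 0 < n := by
      by_contra h
      exact h2.2 (conv_pos_supp _ _ (fun t ht => by have := hpsD j t ht; omega)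
        (fun t ht => by have := hpsD (m-j+1) t ht; omega) n (by omega))
    have h3 := h2.1
    rw [lt_abs] at h3; omega
  have hAqS : ∀ j : ℕ, ∀ n, piGT N (conv (Dx j q) (Dx (m - j + 1) q)) n ≠ 0 → n < -(N:ℤ) := by
    intro j n hn
    have h2 := piGT_ne_zero N _ n hn
    have hneg : n < 0 := by
      by_contra h
      exact h2.2 (conv_neg_supp _ _ (fun t ht => by have := hqsD j t ht; omega)
        (fun t ht => by have := hqsD (m-j+1) t ht; omega) n (by omega))
    have h3 := h2.1
    rw [lt_abs] at h3; omega
  rw [hM, conv_add_left, conv_smul_left, conv_smul_left,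
    conv_finset_sum_left, conv_finset_sum_left,
    Finsupp.add_apply, Finsupp.smul_apply, Finsupp.smul_apply,
    Finsupp.finset_sum_apply, Finsupp.finset_sum_apply,
    smul_eq_mul, smul_eq_mul, Finset.mul_sum, Finset.mul_sum, ← Finset.sum_add_distrib]
  refine Finset.sum_congr rfl fun j hj => ?_
  rw [conv_smul_left, conv_smul_left, Finsupp.smul_apply, Finsupp.smul_apply,
    smul_eq_mul, smul_eq_mul]
  rw [conv_zero_replace N _ _ _ (hApS j) hY, conv_zero_replace' N _ _ _ (hAqS j) hY']
  ring

/-- For every `m ≥ 1` there exist complex numbers `a₁, …, a_m` (depending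
only on `m`) such that for every `N ≥ 1` and every trigonometric polynomial
`u = Σ_{|j| ≤ N} c_j e^{ijx}` with `c₀ = 0`,
`∫₀^{2π} u·(H∂ₓ^m π_{>N}(u ∂ₓ u))·∂ₓ^{m+1}u dx
  = Σ_{j=1}^m a_j ∫₀^{2π} [π_{>N}(∂ₓ^j u⁺·∂ₓ^{m-j+1}u⁺)·π_{>N}(u⁻·∂ₓ^{m+1}u⁻)
      − π_{>N}(∂ₓ^j u⁻·∂ₓ^{m-j+1}u⁻)·π_{>N}(u⁺·∂ₓ^{m+1}u⁺)] dx`. -/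
theorem stmt_6 (m : ℕ) (hm : 1 ≤ m) :
    ∃ a : ℕ → ℂ, ∀ N : ℕ, 1 ≤ N → ∀ c : ℤ →₀ ℂ,
      c 0 = 0 → (∀ j : ℤ, (N : ℤ) < |j| → c j = 0) →
      (∫ x in (0:ℝ)..(2 * Real.pi),
          toFun c x * toFun (Hilb (Dx m (piGT N (conv c (Dx 1 c))))) x *
            toFun (Dx (m + 1) c) x)
        = ∑ j ∈ Finset.Icc 1 m, a j *
            ∫ x in (0:ℝ)..(2 * Real.pi),
              (toFun (piGT N (conv (Dx j (posPart c)) (Dx (m - j + 1) (posPart c)))) x *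
                  toFun (piGT N (conv (negPart c) (Dx (m + 1) (negPart c)))) x
                - toFun (piGT N (conv (Dx j (negPart c)) (Dx (m - j + 1) (negPart c)))) x *
                  toFun (piGT N (conv (posPart c) (Dx (m + 1) (posPart c)))) x) := by
  classical
  refine ⟨fun j => -Complex.I * (m.choose j : ℂ), ?_⟩
  intro N hN c hc0 hcN
  have hLHS : (∫ x in (0:ℝ)..(2 * Real.pi),
        toFun c x * toFun (Hilb (Dx m (piGT N (conv c (Dx 1 c))))) x *
          toFun (Dx (m + 1) c) x)
      = 2 * Real.pi *
          conv (Hilb (Dx m (piGT N (conv c (Dx 1 c))))) (conv c (Dx (m + 1) c)) 0 := by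
    rw [← integral_toFun]
    apply intervalIntegral.integral_congr
    intro x _
    rw [toFun_conv, toFun_conv]
    ring
  have hRHS : ∀ j : ℕ,
      (∫ x in (0:ℝ)..(2 * Real.pi),
          (toFun (piGT N (conv (Dx j (posPart c)) (Dx (m - j + 1) (posPart c)))) x *
              toFun (piGT N (conv (negPart c) (Dx (m + 1) (negPart c)))) x
            - toFun (piGT N (conv (Dx j (negPart c)) (Dx (m - j + 1) (negPart c)))) x *
              toFun (piGT N (conv (posPart c) (Dx (m + 1) (posPart c)))) x))
        = 2 * Real.pi *
            (conv (piGT N (conv (Dx j (posPart c)) (Dx (m - j + 1) (posPart c))))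
                (piGT N (conv (negPart c) (Dx (m + 1) (negPart c)))) 0
              - conv (piGT N (conv (Dx j (negPart c)) (Dx (m - j + 1) (negPart c))))
                (piGT N (conv (posPart c) (Dx (m + 1) (posPart c)))) 0) := by
    intro j
    have h1 : (∫ x in (0:ℝ)..(2 * Real.pi),
          (toFun (piGT N (conv (Dx j (posPart c)) (Dx (m - j + 1) (posPart c)))) x *
              toFun (piGT N (conv (negPart c) (Dx (m + 1) (negPart c)))) x
            - toFun (piGT N (conv (Dx j (negPart c)) (Dx (m - j + 1) (negPart c)))) x *
              toFun (piGT N (conv (posPart c) (Dx (m + 1) (posPart c)))) x))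
        = 2 * Real.pi *
            ((conv (piGT N (conv (Dx j (posPart c)) (Dx (m - j + 1) (posPart c))))
                (piGT N (conv (negPart c) (Dx (m + 1) (negPart c))))
              - conv (piGT N (conv (Dx j (negPart c)) (Dx (m - j + 1) (negPart c))))
                (piGT N (conv (posPart c) (Dx (m + 1) (posPart c))))) 0) := by
      rw [← integral_toFun]
      apply intervalIntegral.integral_congr
      intro x _
      rw [toFun_sub, toFun_conv, toFun_conv]
    rw [h1, Finsupp.sub_apply]
  rw [hLHS, core m N c hc0 hcN]
  have hrange : Finset.range (m + 1) = insert 0 (Finset.Icc 1 m) := by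
    ext k; simp [Nat.lt_succ_iff]; omega
  rw [hrange, Finset.sum_insert (by simp)]
  have h0 : (m.choose 0 : ℂ) *
      (-Complex.I *
          conv (piGT N (conv (Dx 0 (posPart c)) (Dx (m - 0 + 1) (posPart c))))
            (piGT N (conv (negPart c) (Dx (m + 1) (negPart c)))) 0
        + Complex.I *
          conv (piGT N (conv (Dx 0 (negPart c)) (Dx (m - 0 + 1) (negPart c))))
            (piGT N (conv (posPart c) (Dx (m + 1) (posPart c)))) 0) = 0 := by
    rw [Dx_zero, Dx_zero]
    simp only [Nat.sub_zero]
    rw [conv_comm (piGT N (conv (negPart c) (Dx (m + 1) (negPart c))))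
      (piGT N (conv (posPart c) (Dx (m + 1) (posPart c))))]
    ring
  rw [h0, zero_add, Finset.mul_sum]
  refine Finset.sum_congr rfl fun j hj => ?_
  rw [hRHS j]
  ring
end
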